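/- arXiv:2603.29970 — 2 statements merged into one kernel-verified Lean document; each statement's English description precedes it below -/
import Mathlib

section
/- Assume the abc Conjecture. Then there exists a constant C > 0 such that for all real X ≥ 2, the number of primes ℓ ≤ X for which there exist integers x ≥ 1 and u with u^2 = 5·x^22 + 4ℓ or u^2 = 5·x^22 − 4ℓ is at most C · X^(6/11). -/
open Real

/-- The radical of a natural number: the product of its distinct prime factors. -/
def rad (n : ℕ) : ℕ := ∏ p ∈ n.primeFactors, p

/-- The abc Conjecture: for every ε > 0 there is a constant `C > 0` such that for all
nonzero coprime integers `a`, `b`, `c` with `a + b = c` one has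
`|c| ≤ C * rad(abc)^(1+ε)`. -/
def ABCConjecture : Prop :=
  ∀ ε : ℝ, 0 < ε → ∃ C : ℝ, 0 < C ∧ ∀ a b c : ℤ,
    a ≠ 0 → b ≠ 0 → c ≠ 0 → IsCoprime a b → a + b = c →
    ((|c| : ℤ) : ℝ) ≤ C * (rad (a * b * c).natAbs : ℝ) ^ (1 + ε)

/-!
Put `d = u² - 5x²²`, so `|d| = 4ℓ`; then `gcd(5x²², d) ≤ 20`, and abc with `ε = 1/2` applied to
`5x²² + d = u²` gives `u² ≪ rad(5x²² d u²)^{3/2} ≤ (20ℓx|u|)^{3/2}`. When `ℓ < x²²` also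
`|u| ≥ x¹¹`, and comparing the two bounds yields `x⁸ ≪ ℓ³ ≤ X³`.

So each prime counted equals `|u² - 5x²²| / 4` for a lattice point with `1 ≤ x ≪ X^{3/8}`, `u ≥ 0`
and `|u² - 5x²²| ≤ 4X`. For fixed `x` these `u` fill an interval of length at most `√(8X)`, and at
most `8X / x¹¹` once `x²² ≥ X`. Summing the first bound over `x ≤ X^{1/22}` and the second over
`x > X^{1/22}` gives `O(X^{1/22 + 1/2}) = O(X^{6/11})` points, besides one extra point per `x`.
-/

open Finset

lemma rad_dvd_rad_of_dvd {m n : ℕ} (h : m ∣ n) (hn : n ≠ 0) : rad m ∣ rad n :=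
  prod_dvd_prod_of_subset _ _ _ (Nat.primeFactors_mono h hn)

lemma rad_dvd_of_dvd_pow {n k m : ℕ} (hn : n ≠ 0) (hk : k ≠ 0) (h : n ∣ k ^ m) : rad n ∣ k :=
  (prod_dvd_prod_of_subset _ _ _ ((Nat.exists_dvd_pow_iff hn hk).mp ⟨m, h⟩)).trans
    (Nat.prod_primeFactors_dvd k)

lemma ABCConjecture.abs_le_gcd_mul (habc : ABCConjecture) {ε : ℝ} (hε : 0 < ε) :
    ∃ C : ℝ, 0 < C ∧ ∀ a b c : ℤ, a ≠ 0 → b ≠ 0 → c ≠ 0 → a + b = c →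
      |(c : ℝ)| ≤ Int.gcd a b * C * (rad (a * b * c).natAbs : ℝ) ^ (1 + ε) := by
  obtain ⟨C, hC, hCabc⟩ := habc ε hε
  refine ⟨C, hC, fun a b c ha hb hc hsum => ?_⟩
  obtain ⟨g, a, b, hg, hab, rfl, rfl⟩ := Int.exists_gcd_one' (Int.gcd_pos_of_ne_zero_left b ha)
  subst hsum
  have hg0 : (g : ℤ) ≠ 0 := by exact_mod_cast hg.ne'
  have hrad : rad (a * b * (a + b)).natAbs ≤ rad (a * g * (b * g) * (a * g + b * g)).natAbs :=
    Nat.le_of_dvd (prod_pos fun p hp => (Nat.prime_of_mem_primeFactors hp).pos)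
      (rad_dvd_rad_of_dvd (Int.natAbs_dvd_natAbs.mpr ⟨g ^ 3, by ring⟩) (by simp [*]))
  have hreduced := hCabc a b (a + b) (left_ne_zero_of_mul ha) (left_ne_zero_of_mul hb)
    (fun h => hc (by rw [← add_mul, h, zero_mul])) (Int.isCoprime_iff_gcd_eq_one.mpr hab) rfl
  rw [Int.gcd_mul_right, hab, one_mul, Int.natAbs_natCast]
  push_cast at hreduced ⊢
  rw [← add_mul, abs_mul, Nat.abs_cast, mul_comm, mul_assoc]
  gcongr
  exact hreduced.trans (by gcongr)

lemma natAbs_sub_eq_of_eq_add_or_eq_sub {a b : ℤ} {n : ℕ} (h : a = b + n ∨ a = b - n) :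
    (a - b).natAbs = n := by
  omega

lemma dvd_four_of_dvd_of_natAbs_eq {ℓ : ℕ} (hℓ : ℓ.Prime) {x u : ℤ}
    (h : (u ^ 2 - 5 * x ^ 22).natAbs = 4 * ℓ) (hx : (ℓ : ℤ) ∣ x) : ℓ ∣ 4 := by
  have hd : (ℓ : ℤ) ∣ u ^ 2 - 5 * x ^ 22 := Int.natCast_dvd.mpr (h ▸ dvd_mul_left ℓ 4)
  have hx2 : (ℓ : ℤ) ^ 2 ∣ 5 * x ^ 22 :=
    ((pow_dvd_pow_of_dvd hx 2).trans (pow_dvd_pow x (by norm_num))).mul_left 5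
  have hu2 : (ℓ : ℤ) ∣ u ^ 2 :=
    sub_add_cancel (u ^ 2) (5 * x ^ 22) ▸ dvd_add hd ((dvd_pow_self _ two_ne_zero).trans hx2)
  have hu : (ℓ : ℤ) ∣ u := (Nat.prime_iff_prime_int.mp hℓ).dvd_of_dvd_pow hu2
  have hd2 : (ℓ : ℤ) ^ 2 ∣ u ^ 2 - 5 * x ^ 22 := dvd_sub (pow_dvd_pow_of_dvd hu 2) hx2
  rw [← Int.natCast_pow, Int.natCast_dvd, h, sq] at hd2
  exact Nat.dvd_of_mul_dvd_mul_right hℓ.pos hd2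

lemma gcd_le_twenty_of_natAbs_eq {ℓ : ℕ} (hℓ : ℓ.Prime) {x u : ℤ}
    (h : (u ^ 2 - 5 * x ^ 22).natAbs = 4 * ℓ) :
    Int.gcd (5 * x ^ 22) (u ^ 2 - 5 * x ^ 22) ≤ 20 := by
  have hg : Int.gcd (5 * x ^ 22) (u ^ 2 - 5 * x ^ 22) ∣ 4 * ℓ := h ▸ Nat.gcd_dvd_right _ _
  by_cases hℓg : ℓ ∣ Int.gcd (5 * x ^ 22) (u ^ 2 - 5 * x ^ 22)
  · have h5x : (ℓ : ℤ) ∣ 5 * x ^ 22 :=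
      (Int.natCast_dvd_natCast.mpr hℓg).trans (Int.gcd_dvd_left _ _)
    have hℓ5 : ℓ ≤ 5 := by
      rcases (Nat.prime_iff_prime_int.mp hℓ).dvd_mul.mp h5x with h5 | hx
      · exact Nat.le_of_dvd (by norm_num) (by exact_mod_cast h5)
      · exact (Nat.le_of_dvd (by norm_num) (dvd_four_of_dvd_of_natAbs_eq hℓ h
          ((Nat.prime_iff_prime_int.mp hℓ).dvd_of_dvd_pow hx))).trans (by norm_num)
    exact (Nat.le_of_dvd (by have := hℓ.pos; omega) hg).trans (by omega)
  · have := ((Nat.Prime.coprime_iff_not_dvd hℓ).mpr hℓg).symm.dvd_of_dvd_mul_right hg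
    exact (Nat.le_of_dvd (by norm_num) this).trans (by norm_num)

lemma rad_natAbs_le_of_natAbs_eq {ℓ x : ℕ} {u : ℤ} (hℓ : 0 < ℓ) (hx : 0 < x) (hu : u ≠ 0)
    (h : (u ^ 2 - 5 * (x : ℤ) ^ 22).natAbs = 4 * ℓ) :
    rad (5 * (x : ℤ) ^ 22 * (u ^ 2 - 5 * x ^ 22) * u ^ 2).natAbs ≤ 20 * ℓ * x * u.natAbs := by
  have hu' := Int.natAbs_pos.mpr hu
  have hN : (5 * (x : ℤ) ^ 22 * (u ^ 2 - 5 * x ^ 22) * u ^ 2).natAbs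
      = 5 * x ^ 22 * (4 * ℓ) * u.natAbs ^ 2 := by
    simp [Int.natAbs_mul, Int.natAbs_pow, h]
  refine Nat.le_of_dvd (by positivity) (rad_dvd_of_dvd_pow (m := 22) ?_ (by positivity) ?_)
  · rw [hN]; positivity
  · rw [hN]; exact ⟨20 ^ 21 * ℓ ^ 21 * u.natAbs ^ 20, by ring⟩

lemma abs_sq_sub_eq_of_natAbs_eq {ℓ x : ℕ} {u : ℤ} (h : (u ^ 2 - 5 * (x : ℤ) ^ 22).natAbs = 4 * ℓ) :
    |(u : ℝ) ^ 2 - 5 * (x : ℝ) ^ 22| = 4 * (ℓ : ℝ) := by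
  have : |u ^ 2 - 5 * (x : ℤ) ^ 22| = ((4 * ℓ : ℕ) : ℤ) := by rw [← h, Int.natCast_natAbs]
  exact_mod_cast this

lemma pow_eleven_le_abs_of_natAbs_eq {ℓ x : ℕ} {u : ℤ} (hx : (1 : ℝ) ≤ x) (hℓx : (ℓ : ℝ) < x ^ 22)
    (h : (u ^ 2 - 5 * (x : ℤ) ^ 22).natAbs = 4 * ℓ) : (x : ℝ) ^ 11 ≤ |(u : ℝ)| := by
  rw [← abs_of_pos (by positivity : (0 : ℝ) < x ^ 11), ← sq_le_sq, ← pow_mul]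
  norm_num
  linarith [neg_abs_le ((u : ℝ) ^ 2 - 5 * (x : ℝ) ^ 22), abs_sq_sub_eq_of_natAbs_eq h]

lemma pow_eight_le_of_sq_le_rpow {C ℓ x v : ℝ} (hℓ : 0 ≤ ℓ) (hx : 0 < x) (hxv : x ^ 11 ≤ v)
    (h : v ^ 2 ≤ 20 * C * (20 * ℓ * x * v) ^ (1 + 1 / 2 : ℝ)) :
    x ^ 8 ≤ 3200000 * C ^ 2 * ℓ ^ 3 := by
  have hv : 0 < v := (pow_pos hx 11).trans_le hxv
  have h4 : v * v ^ 3 ≤ 3200000 * C ^ 2 * ℓ ^ 3 * x ^ 3 * v ^ 3 := by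
    have hsq : ((20 * ℓ * x * v) ^ (1 + 1 / 2 : ℝ)) ^ 2 = (20 * ℓ * x * v) ^ 3 := by
      rw [← rpow_natCast, ← rpow_mul (by positivity)]; norm_num
    have := pow_le_pow_left₀ (by positivity) h 2
    rw [mul_pow, hsq] at this
    linear_combination this
  have hv' := le_of_mul_le_mul_right h4 (by positivity)
  have : x ^ 8 * x ^ 3 ≤ 3200000 * C ^ 2 * ℓ ^ 3 * x ^ 3 := by linear_combination hxv.trans hv'
  exact le_of_mul_le_mul_right this (by positivity)

lemma ABCConjecture.exists_pow_eight_le (habc : ABCConjecture) :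
    ∃ K : ℝ, 0 < K ∧ ∀ ℓ : ℕ, ℓ.Prime → ∀ (x : ℕ) (u : ℤ), 1 ≤ x →
      (u ^ 2 - 5 * (x : ℤ) ^ 22).natAbs = 4 * ℓ → (x : ℝ) ^ 8 ≤ K * ℓ ^ 3 := by
  obtain ⟨C, hC, hCabc⟩ := habc.abs_le_gcd_mul (ε := 1 / 2) (by norm_num)
  refine ⟨max 1 (3200000 * C ^ 2), by positivity, fun ℓ hℓ x u hx h => ?_⟩
  have hℓ1 : (1 : ℝ) ≤ ℓ := by exact_mod_cast hℓ.one_lt.le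
  have hx1 : (1 : ℝ) ≤ x := by exact_mod_cast hx
  rcases le_or_gt ((x : ℝ) ^ 22) ℓ with hsmall | hlarge
  · calc (x : ℝ) ^ 8 ≤ x ^ 22 := pow_le_pow_right₀ hx1 (by norm_num)
      _ ≤ ℓ ^ 3 := hsmall.trans (le_self_pow₀ hℓ1 (by norm_num))
      _ ≤ _ := le_mul_of_one_le_left (by positivity) (le_max_left _ _)
  have hxu := pow_eleven_le_abs_of_natAbs_eq hx1 hlarge h
  have hu : u ≠ 0 := by
    have : (u : ℝ) ≠ 0 := abs_pos.mp ((by positivity : (0 : ℝ) < x ^ 11).trans_le hxu)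
    exact_mod_cast this
  have habc' : |(u : ℝ)| ^ 2 ≤ 20 * C * (20 * ℓ * x * |(u : ℝ)|) ^ (1 + 1 / 2 : ℝ) := by
    calc |(u : ℝ)| ^ 2 = |((u ^ 2 : ℤ) : ℝ)| := by push_cast; exact (abs_pow _ _).symm
      _ ≤ _ := hCabc (5 * x ^ 22) (u ^ 2 - 5 * x ^ 22) (u ^ 2)
          (mul_ne_zero (by norm_num) (pow_ne_zero _ (by omega)))
          (Int.natAbs_ne_zero.mp (by rw [h]; have := hℓ.pos; omega)) (pow_ne_zero 2 hu) (by ring)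
      _ ≤ _ := by
        gcongr
        · exact_mod_cast gcd_le_twenty_of_natAbs_eq hℓ h
        · rw [← Int.cast_abs, ← Int.natCast_natAbs]
          exact_mod_cast rad_natAbs_le_of_natAbs_eq hℓ.pos hx hu h
  exact (pow_eight_le_of_sq_le_rpow (by positivity) (by positivity) hxu habc').trans
    (by gcongr; exact le_max_right _ _)

lemma le_rpow_of_pow_eight_le {K X x ℓ : ℝ} (hK : 0 < K) (hx : 0 ≤ x) (hℓ : 0 ≤ ℓ)
    (hℓX : ℓ ≤ X) (h : x ^ 8 ≤ K * ℓ ^ 3) : x ≤ K ^ (8⁻¹ : ℝ) * X ^ ((3 : ℝ) / 8) := by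
  have hX : 0 ≤ X := hℓ.trans hℓX
  rw [← pow_le_pow_iff_left₀ hx (by positivity) (by norm_num : 8 ≠ 0), mul_pow,
    ← rpow_natCast (K ^ _), ← rpow_mul hK.le, ← rpow_natCast (X ^ _), ← rpow_mul hX]
  norm_num
  exact h.trans (by gcongr)

lemma sqrt_add_sub_sqrt_sub_le_sqrt {A B : ℝ} (hB : 0 ≤ B) :
    √(A + B) - √(A - B) ≤ √(2 * B) := by
  rw [sub_le_iff_le_add, sqrt_le_left (by positivity)]
  rcases le_total 0 (A - B) with hAB | hAB
  · nlinarith [sq_sqrt hAB, sq_sqrt (by positivity : 0 ≤ 2 * B), sqrt_nonneg (2 * B),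
      sqrt_nonneg (A - B)]
  · rw [sqrt_eq_zero_of_nonpos hAB, add_zero, sq_sqrt (by positivity)]
    linarith

lemma sqrt_add_sub_sqrt_sub_le_div {A B : ℝ} (hB : 0 < B) (hBA : B ≤ A) :
    √(A + B) - √(A - B) ≤ 2 * B / √(A + B) := by
  have hq := sq_sqrt (sub_nonneg.mpr hBA)
  have hp := sq_sqrt (by linarith : 0 ≤ A + B)
  have hqp : √(A - B) ≤ √(A + B) := sqrt_le_sqrt (by linarith)
  rw [le_div_iff₀ (sqrt_pos.mpr (by linarith))]
  nlinarith [sqrt_nonneg (A - B)]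

lemma sum_Ioo_inv_pow_le (k n m : ℕ) :
    ∑ i ∈ Ioo k n, ((i : ℝ) ^ (m + 2))⁻¹ ≤ 2 / ((k : ℝ) + 1) ^ (m + 1) := by
  calc ∑ i ∈ Ioo k n, ((i : ℝ) ^ (m + 2))⁻¹
      ≤ ∑ i ∈ Ioo k n, (((k : ℝ) + 1) ^ m)⁻¹ * ((i : ℝ) ^ 2)⁻¹ := by
        refine sum_le_sum fun i hi => ?_
        have hki : (k : ℝ) + 1 ≤ i := by exact_mod_cast (mem_Ioo.mp hi).1
        have : (0 : ℝ) < i := by linarith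
        rw [← mul_inv, pow_add]
        gcongr
    _ ≤ (((k : ℝ) + 1) ^ m)⁻¹ * (2 / ((k : ℝ) + 1)) := by
        rw [← mul_sum]; gcongr; exact sum_Ioo_inv_sq_le k n
    _ = 2 / ((k : ℝ) + 1) ^ (m + 1) := by rw [pow_succ]; field_simp

lemma card_Icc_ceil_floor_le {a b : ℝ} (h : a ≤ b) :
    ((Icc ⌈a⌉ ⌊b⌋).card : ℝ) ≤ b - a + 1 := by
  have hab : ⌈a⌉ ≤ ⌊b⌋ + 1 := (Int.ceil_le_floor_add_one a).trans (by gcongr)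
  have hcard : ((Icc ⌈a⌉ ⌊b⌋).card : ℤ) = ⌊b⌋ + 1 - ⌈a⌉ := by
    rw [Int.card_Icc, Int.toNat_of_nonneg (by omega)]
  rw [← Int.cast_natCast, hcard]
  push_cast
  linarith [Int.floor_le b, Int.le_ceil a]

lemma sum_sqrt_sub_sqrt_le_of_subset_Icc {t : ℝ} (ht : 1 ≤ t) {s : Finset ℕ}
    (hs : s ⊆ Icc 1 ⌊t⌋₊) :
    ∑ x ∈ s, (√(5 * (x : ℝ) ^ 22 + 4 * t ^ 22) - √(5 * (x : ℝ) ^ 22 - 4 * t ^ 22))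
      ≤ 3 * t ^ 12 := by
  have hcard : (s.card : ℝ) ≤ t := by
    refine le_trans ?_ (Nat.floor_le (by positivity))
    exact_mod_cast (card_le_card hs).trans (Nat.card_Icc 1 ⌊t⌋₊).le
  have hterm : ∀ x ∈ s,
      √(5 * (x : ℝ) ^ 22 + 4 * t ^ 22) - √(5 * (x : ℝ) ^ 22 - 4 * t ^ 22) ≤ 3 * t ^ 11 := by
    intro x _
    refine (sqrt_add_sub_sqrt_sub_le_sqrt (by positivity)).trans ?_
    rw [sqrt_le_left (by positivity)]
    nlinarith [pow_pos (by linarith : (0 : ℝ) < t) 22]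
  calc _ ≤ (s.card : ℝ) * (3 * t ^ 11) := by simpa using sum_le_card_nsmul _ _ _ hterm
    _ ≤ t * (3 * t ^ 11) := by gcongr
    _ = 3 * t ^ 12 := by ring

lemma sum_sqrt_sub_sqrt_le_of_subset_Ioo {t : ℝ} (ht : 1 ≤ t) {s : Finset ℕ} {n : ℕ}
    (hs : s ⊆ Ioo ⌊t⌋₊ n) :
    ∑ x ∈ s, (√(5 * (x : ℝ) ^ 22 + 4 * t ^ 22) - √(5 * (x : ℝ) ^ 22 - 4 * t ^ 22))
      ≤ 16 * t ^ 12 := by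
  have hterm : ∀ x ∈ s, √(5 * (x : ℝ) ^ 22 + 4 * t ^ 22) - √(5 * (x : ℝ) ^ 22 - 4 * t ^ 22)
      ≤ 8 * t ^ 22 * ((x : ℝ) ^ (9 + 2))⁻¹ := by
    intro x hx
    have htx : t ≤ x := (Nat.lt_of_floor_lt (mem_Ioo.mp (hs hx)).1).le
    have hx0 : (0 : ℝ) < x := by linarith
    have hx11 : (x : ℝ) ^ 11 ≤ √(5 * (x : ℝ) ^ 22 + 4 * t ^ 22) := by
      rw [le_sqrt' (pow_pos hx0 11)]; nlinarith [pow_pos (by linarith : (0 : ℝ) < t) 22]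
    calc _ ≤ 2 * (4 * t ^ 22) / √(5 * (x : ℝ) ^ 22 + 4 * t ^ 22) :=
          sqrt_add_sub_sqrt_sub_le_div (by positivity)
            (by nlinarith [pow_le_pow_left₀ (by linarith : (0 : ℝ) ≤ t) htx 22,
              pow_pos (by linarith : (0 : ℝ) < t) 22])
      _ ≤ 2 * (4 * t ^ 22) / (x : ℝ) ^ 11 :=
          div_le_div_of_nonneg_left (by positivity) (pow_pos hx0 11) hx11
      _ = _ := by ring
  calc _ ≤ ∑ x ∈ Ioo ⌊t⌋₊ n, 8 * t ^ 22 * ((x : ℝ) ^ (9 + 2))⁻¹ :=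
        (sum_le_sum hterm).trans (sum_le_sum_of_subset_of_nonneg hs fun _ _ _ => by positivity)
    _ ≤ 8 * t ^ 22 * (2 / ((⌊t⌋₊ : ℝ) + 1) ^ (9 + 1)) := by
        rw [← mul_sum]; gcongr; exact sum_Ioo_inv_pow_le _ _ _
    _ ≤ 8 * t ^ 22 * (2 / t ^ 10) := by gcongr; exact (Nat.lt_floor_add_one t).le
    _ = 16 * t ^ 12 := by field_simp; ring

lemma sum_sqrt_sub_sqrt_le {X : ℝ} (hX : 1 ≤ X) (M : ℕ) :
    ∑ x ∈ Icc 1 M, (√(5 * (x : ℝ) ^ 22 + 4 * X) - √(5 * (x : ℝ) ^ 22 - 4 * X))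
      ≤ 19 * X ^ ((6 : ℝ) / 11) := by
  obtain ⟨t, ht, rfl⟩ : ∃ t : ℝ, 1 ≤ t ∧ t ^ 22 = X :=
    ⟨X ^ ((22 : ℕ)⁻¹ : ℝ), one_le_rpow hX (by positivity),
      rpow_inv_natCast_pow (by linarith) (by norm_num)⟩
  have ht12 : (t ^ 22) ^ ((6 : ℝ) / 11) = t ^ 12 := by
    rw [← rpow_natCast, ← rpow_mul (by positivity)]; norm_num
  rw [ht12, ← sum_filter_add_sum_filter_not _ (· ≤ ⌊t⌋₊)]
  have hsmall := sum_sqrt_sub_sqrt_le_of_subset_Icc ht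
    (s := (Icc 1 M).filter (· ≤ ⌊t⌋₊)) fun x hx => by simp at hx ⊢; omega
  have hlarge := sum_sqrt_sub_sqrt_le_of_subset_Ioo ht (n := M + 1)
    (s := (Icc 1 M).filter (¬ · ≤ ⌊t⌋₊)) fun x hx => by simp at hx ⊢; omega
  linarith

-- For `u : ℤ`, the interval below is `u ≥ 0 ∧ |u² - 5x²²| ≤ 4X` (the `√` of a negative is `0`).
noncomputable def candidatePrimes (X : ℝ) (M : ℕ) : Finset ℕ :=
  (Icc 1 M).biUnion fun x : ℕ =>
    (Icc ⌈√(5 * (x : ℝ) ^ 22 - 4 * X)⌉ ⌊√(5 * (x : ℝ) ^ 22 + 4 * X)⌋).image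
      fun u : ℤ => (u ^ 2 - 5 * (x : ℤ) ^ 22).natAbs / 4

lemma mem_candidatePrimes {X : ℝ} {M x ℓ : ℕ} {u : ℤ} (hx : 1 ≤ x) (hxM : x ≤ M)
    (hℓX : (ℓ : ℝ) ≤ X) (h : (u ^ 2 - 5 * (x : ℤ) ^ 22).natAbs = 4 * ℓ) :
    ℓ ∈ candidatePrimes X M := by
  have habs := abs_le.mp ((abs_sq_sub_eq_of_natAbs_eq h).trans_le
    (by linarith : 4 * (ℓ : ℝ) ≤ 4 * X))
  refine mem_biUnion.mpr ⟨x, mem_Icc.mpr ⟨hx, hxM⟩,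
    mem_image.mpr ⟨|u|, mem_Icc.mpr ⟨?_, ?_⟩, ?_⟩⟩
  · rw [Int.ceil_le, Int.cast_abs, ← sqrt_sq_eq_abs]
    exact sqrt_le_sqrt (by linarith)
  · rw [Int.le_floor, Int.cast_abs, ← sqrt_sq_eq_abs]
    exact sqrt_le_sqrt (by linarith)
  · rw [sq_abs, h]; omega

lemma card_candidatePrimes_le {X : ℝ} (hX : 1 ≤ X) (M : ℕ) :
    ((candidatePrimes X M).card : ℝ) ≤ M + 19 * X ^ ((6 : ℝ) / 11) := by
  calc ((candidatePrimes X M).card : ℝ)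
      ≤ ∑ x ∈ Icc 1 M,
          ((Icc ⌈√(5 * (x : ℝ) ^ 22 - 4 * X)⌉ ⌊√(5 * (x : ℝ) ^ 22 + 4 * X)⌋).card : ℝ) := by
        unfold candidatePrimes
        exact_mod_cast card_biUnion_le.trans (sum_le_sum fun _ _ => card_image_le)
    _ ≤ ∑ x ∈ Icc 1 M, (√(5 * (x : ℝ) ^ 22 + 4 * X) - √(5 * (x : ℝ) ^ 22 - 4 * X) + 1) :=
        sum_le_sum fun _ _ => card_Icc_ceil_floor_le (sqrt_le_sqrt (by linarith))
    _ ≤ M + 19 * X ^ ((6 : ℝ) / 11) := by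
        rw [sum_add_distrib, sum_const, Nat.card_Icc, add_tsub_cancel_right, nsmul_one,
          add_comm]
        gcongr
        exact sum_sqrt_sub_sqrt_le hX M

theorem abc_implies_A4_bound (habc : ABCConjecture) :
    ∃ C : ℝ, 0 < C ∧ ∀ X : ℝ, 2 ≤ X →
      (Set.ncard {ℓ : ℕ | ℓ.Prime ∧ (ℓ : ℝ) ≤ X ∧
          ∃ x u : ℤ, 1 ≤ x ∧
            (u ^ 2 = 5 * x ^ 22 + 4 * (ℓ : ℤ) ∨ u ^ 2 = 5 * x ^ 22 - 4 * (ℓ : ℤ))} : ℝ)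
        ≤ C * X ^ ((6 : ℝ) / 11) := by
  obtain ⟨K, hK, hbound⟩ := habc.exists_pow_eight_le
  refine ⟨K ^ (8⁻¹ : ℝ) + 19, by positivity, fun X hX => ?_⟩
  have hX1 : (1 : ℝ) ≤ X := by linarith
  set M := ⌊K ^ (8⁻¹ : ℝ) * X ^ ((3 : ℝ) / 8)⌋₊
  have hsub : {ℓ : ℕ | ℓ.Prime ∧ (ℓ : ℝ) ≤ X ∧ ∃ x u : ℤ, 1 ≤ x ∧
      (u ^ 2 = 5 * x ^ 22 + 4 * (ℓ : ℤ) ∨ u ^ 2 = 5 * x ^ 22 - 4 * (ℓ : ℤ))}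
      ⊆ candidatePrimes X M := by
    rintro ℓ ⟨hℓ, hℓX, x, u, hx, hxu⟩
    lift x to ℕ using by omega
    have h := natAbs_sub_eq_of_eq_add_or_eq_sub (n := 4 * ℓ) (by push_cast; exact hxu)
    refine mem_candidatePrimes (by exact_mod_cast hx) (Nat.le_floor ?_) hℓX h
    exact le_rpow_of_pow_eight_le hK (by positivity) (by positivity) hℓX
      (hbound ℓ hℓ x u (by exact_mod_cast hx) h)
  calc _ ≤ ((candidatePrimes X M).card : ℝ) := by
        exact_mod_cast (Set.ncard_le_ncard hsub (finite_toSet _)).trans_eq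
          (Set.ncard_coe_finset _)
    _ ≤ M + 19 * X ^ ((6 : ℝ) / 11) := card_candidatePrimes_le hX1 M
    _ ≤ (K ^ (8⁻¹ : ℝ) + 19) * X ^ ((6 : ℝ) / 11) := by
        rw [add_mul]
        gcongr
        exact (Nat.floor_le (by positivity)).trans
          (mul_le_mul_of_nonneg_left (rpow_le_rpow_of_exponent_le hX1 (by norm_num))
            (by positivity))
end

section
/- Assume the abc Conjecture. Then for every real η > 0 there exists a constant C > 0 such that the following holds: for all real X ≥ 2 and all integers x ≥ 1 and y, if x > X^(2/11) and 1 ≤ |x^11 − y^2| ≤ X, then x ≤ C · X^(4/9 + η). -/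
open Real

/-! Put `k = x¹¹ - y²`. From `X² < x¹¹` we get `|k| ≤ X < x¹¹`, so `y ≠ 0` and `y² ≤ 2x¹¹`.
Dividing `y² + k = x¹¹` by `g = gcd(y², k) ≤ |k|` and applying abc to the coprime triple gives
`x¹¹ ≤ |k| C (|y| |k| x)^(1+ε)`. Squaring and inserting `y² ≤ 2x¹¹`, `|k| ≤ X` yields
`x^(9-13ε) ≪ X^(4+2ε)`, and the exponent `(4+2ε)/(9-13ε)` tends to `4/9` as `ε → 0`. -/

theorem rad_pos (n : ℕ) : 0 < rad n :=
  Finset.prod_pos fun _ hp => (Nat.prime_of_mem_primeFactors hp).pos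

theorem rad_dvd_rad_of_primeFactors_subset {m n : ℕ} (h : m.primeFactors ⊆ n.primeFactors) :
    rad m ∣ rad n :=
  Finset.prod_dvd_prod_of_subset _ _ _ h

theorem rad_le_rad_of_dvd {m n : ℕ} (h : m ∣ n) (hn : n ≠ 0) : rad m ≤ rad n :=
  Nat.le_of_dvd (rad_pos n) (rad_dvd_rad_of_primeFactors_subset (Nat.primeFactors_mono h hn))

theorem rad_le_of_dvd_pow {m n k : ℕ} (h : m ∣ n ^ k) (hn : n ≠ 0) : rad m ≤ n := by
  have hsub : m.primeFactors ⊆ n.primeFactors := fun p hp =>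
    have hp' := Nat.prime_of_mem_primeFactors hp
    Nat.mem_primeFactors.2 ⟨hp', hp'.dvd_of_dvd_pow ((Nat.dvd_of_mem_primeFactors hp).trans h), hn⟩
  exact Nat.le_of_dvd (Nat.pos_of_ne_zero hn)
    ((rad_dvd_rad_of_primeFactors_subset hsub).trans (Nat.prod_primeFactors_dvd n))

theorem ABCConjecture.exists_abs_le_gcd_mul_rad (habc : ABCConjecture) {ε : ℝ} (hε : 0 < ε) :
    ∃ C : ℝ, 0 < C ∧ ∀ a b c : ℤ, a ≠ 0 → b ≠ 0 → c ≠ 0 → a + b = c →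
      ((|c| : ℤ) : ℝ) ≤ Int.gcd a b * C * (rad (a * b * c).natAbs : ℝ) ^ (1 + ε) := by
  obtain ⟨C, hC, hC_abc⟩ := habc ε hε
  refine ⟨C, hC, fun a b c ha hb hc hsum => ?_⟩
  obtain ⟨a', b', hcop, ha', hb'⟩ := Int.exists_gcd_one (Int.gcd_pos_of_ne_zero_left b ha)
  set g := Int.gcd a b
  have hc' : c = (a' + b') * g := by linear_combination ha' + hb' - hsum
  have hdvd : (a' * b' * (a' + b')).natAbs ∣ (a * b * c).natAbs :=
    Int.natAbs_dvd_natAbs.2 ⟨g ^ 3, by rw [ha', hb', hc']; ring⟩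
  have hne : (a * b * c).natAbs ≠ 0 := by simp [ha, hb, hc]
  have key := hC_abc a' b' (a' + b') (left_ne_zero_of_mul (ha' ▸ ha))
    (left_ne_zero_of_mul (hb' ▸ hb)) (left_ne_zero_of_mul (hc' ▸ hc))
    (Int.isCoprime_iff_gcd_eq_one.2 hcop) rfl
  calc ((|c| : ℤ) : ℝ) = g * ((|a' + b'| : ℤ) : ℝ) := by
        rw [hc', abs_mul]; push_cast; rw [Nat.abs_cast]; ring
    _ ≤ g * (C * rad (a' * b' * (a' + b')).natAbs ^ (1 + ε)) := by gcongr
    _ ≤ g * C * rad (a * b * c).natAbs ^ (1 + ε) := by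
        rw [← mul_assoc]; gcongr; exact_mod_cast rad_le_rad_of_dvd hdvd hne

theorem ABCConjecture.exists_pow_eleven_le_mul_rpow (habc : ABCConjecture) {ε : ℝ}
    (hε : 0 < ε) :
    ∃ C : ℝ, 0 < C ∧ ∀ x y : ℤ, 0 < x → y ≠ 0 → x ^ 11 - y ^ 2 ≠ 0 →
      (x : ℝ) ^ 11 ≤ ((|x ^ 11 - y ^ 2| : ℤ) : ℝ) * C *
        (((|y| : ℤ) : ℝ) * ((|x ^ 11 - y ^ 2| : ℤ) : ℝ) * x) ^ (1 + ε) := by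
  obtain ⟨C, hC, hC_abc⟩ := habc.exists_abs_le_gcd_mul_rad hε
  refine ⟨C, hC, fun x y hx hy hk => ?_⟩
  set k := x ^ 11 - y ^ 2
  have hx0 : (0 : ℝ) < x := by exact_mod_cast hx
  have hgcd : ((Int.gcd (y ^ 2) k : ℕ) : ℝ) ≤ ((|k| : ℤ) : ℝ) := by
    exact_mod_cast Int.le_of_dvd (abs_pos.2 hk) ((dvd_abs _ _).2 (Int.gcd_dvd_right _ _))
  have hdvd : (y ^ 2 * k * x ^ 11).natAbs ∣ (y * k * x).natAbs ^ 11 := by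
    rw [← Int.natAbs_pow]; exact Int.natAbs_dvd_natAbs.2 ⟨y ^ 9 * k ^ 10, by ring⟩
  have hrad : (rad (y ^ 2 * k * x ^ 11).natAbs : ℝ) ≤ ((|y| : ℤ) : ℝ) * ((|k| : ℤ) : ℝ) * x := by
    have h := rad_le_of_dvd_pow hdvd (by simp [hy, hk, hx.ne'])
    have hcast : (((y * k * x).natAbs : ℕ) : ℝ) = ((|y| : ℤ) : ℝ) * ((|k| : ℤ) : ℝ) * x := by
      push_cast [Int.natAbs_mul, Nat.cast_natAbs, abs_of_pos hx0]; rfl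
    rw [← hcast]; exact_mod_cast h
  calc (x : ℝ) ^ 11 = ((|x ^ 11| : ℤ) : ℝ) := by push_cast; rw [abs_of_pos (pow_pos hx0 11)]
    _ ≤ _ := hC_abc (y ^ 2) k (x ^ 11) (pow_ne_zero 2 hy) hk (by positivity) (by ring)
    _ ≤ _ := by gcongr

theorem rpow_nine_sub_le_of_pow_eleven_le {x y k X C ε : ℝ} (hx : 0 < x) (hy : 0 ≤ y) (hk : 0 ≤ k)
    (hkX : k ≤ X) (hC : 0 ≤ C) (hε : 0 ≤ ε) (hy2 : y ^ 2 ≤ 2 * x ^ 11)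
    (habc : x ^ 11 ≤ k * C * (y * k * x) ^ (1 + ε)) :
    x ^ (9 - 13 * ε) ≤ C ^ 2 * 2 ^ (1 + ε) * X ^ (4 + 2 * ε) := by
  have hX : 0 ≤ X := hk.trans hkX
  have hsq : (y * k * x) ^ (1 + ε) * (y * k * x) ^ (1 + ε)
      ≤ 2 ^ (1 + ε) * X ^ (2 + 2 * ε) * x ^ (13 + 13 * ε) := by
    rw [← mul_rpow (by positivity) (by positivity)]
    calc (y * k * x * (y * k * x)) ^ (1 + ε) ≤ (2 * X ^ 2 * x ^ 13) ^ (1 + ε) := by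
          refine rpow_le_rpow (by positivity) ?_ (by linarith)
          calc y * k * x * (y * k * x) = y ^ 2 * k ^ 2 * x ^ 2 := by ring
            _ ≤ 2 * x ^ 11 * X ^ 2 * x ^ 2 := by gcongr
            _ = 2 * X ^ 2 * x ^ 13 := by ring
      _ = 2 ^ (1 + ε) * X ^ (2 + 2 * ε) * x ^ (13 + 13 * ε) := by
          rw [mul_rpow (by positivity) (by positivity), mul_rpow (by positivity) (by positivity),
            ← rpow_natCast_mul hX, ← rpow_natCast_mul hx.le]
          norm_num; ring_nf
  have hX2 : X ^ 2 * X ^ (2 + 2 * ε) = X ^ (4 + 2 * ε) := by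
    rw [← rpow_natCast, ← rpow_add' hX (by positivity)]; norm_num; ring_nf
  refine le_of_mul_le_mul_right ?_ (rpow_pos_of_pos hx (13 + 13 * ε))
  calc x ^ (9 - 13 * ε) * x ^ (13 + 13 * ε) = x ^ 11 * x ^ 11 := by
        rw [← rpow_add hx]; norm_num; ring
    _ ≤ (k * C * (y * k * x) ^ (1 + ε)) * (k * C * (y * k * x) ^ (1 + ε)) := by gcongr
    _ = k ^ 2 * C ^ 2 * ((y * k * x) ^ (1 + ε) * (y * k * x) ^ (1 + ε)) := by ring
    _ ≤ X ^ 2 * C ^ 2 * (2 ^ (1 + ε) * X ^ (2 + 2 * ε) * x ^ (13 + 13 * ε)) := by gcongr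
    _ = C ^ 2 * 2 ^ (1 + ε) * X ^ (4 + 2 * ε) * x ^ (13 + 13 * ε) := by
        rw [← hX2]; ring

theorem le_mul_rpow_of_rpow_le {x K X d e f : ℝ} (hx : 0 ≤ x) (hK : 0 ≤ K) (hX : 1 ≤ X)
    (he : 0 < e) (h : x ^ e ≤ K * X ^ d) (hdef : d / e ≤ f) : x ≤ K ^ e⁻¹ * X ^ f :=
  have hX0 : 0 ≤ X := zero_le_one.trans hX
  calc x ≤ (K * X ^ d) ^ e⁻¹ := (le_rpow_inv_iff_of_pos hx (by positivity) he).2 h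
    _ = K ^ e⁻¹ * X ^ (d / e) := by rw [mul_rpow hK (by positivity), ← rpow_mul hX0, div_eq_mul_inv]
    _ ≤ K ^ e⁻¹ * X ^ f := by gcongr

theorem exists_pos_div_le_four_ninths_add {η : ℝ} (hη : 0 < η) :
    ∃ ε : ℝ, 0 < ε ∧ 13 * ε < 9 ∧ (4 + 2 * ε) / (9 - 13 * ε) ≤ 4 / 9 + η := by
  refine ⟨min (η / 2) (1 / 4), by positivity, by linarith [min_le_right (η / 2) (1 / 4)], ?_⟩
  have h1 := min_le_left (η / 2) (1 / 4)
  have h2 := min_le_right (η / 2) (1 / 4)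
  have h3 : 0 < min (η / 2) (1 / 4) := by positivity
  rw [div_le_iff₀ (by linarith)]
  nlinarith

theorem abc_implies_x_bound_E2 (habc : ABCConjecture) :
    ∀ η : ℝ, 0 < η → ∃ C : ℝ, 0 < C ∧ ∀ X : ℝ, 2 ≤ X → ∀ x y : ℤ, 1 ≤ x →
      X ^ ((2 : ℝ) / 11) < (x : ℝ) →
      1 ≤ |x ^ 11 - y ^ 2| → ((|x ^ 11 - y ^ 2| : ℤ) : ℝ) ≤ X →
      (x : ℝ) ≤ C * X ^ ((4 : ℝ) / 9 + η) := by
  intro η hη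
  obtain ⟨ε, hε, hε9, hexp⟩ := exists_pos_div_le_four_ninths_add hη
  obtain ⟨C, hC, hC_abc⟩ := habc.exists_pow_eleven_le_mul_rpow hε
  refine ⟨(C ^ 2 * 2 ^ (1 + ε)) ^ (9 - 13 * ε)⁻¹, by positivity, ?_⟩
  intro X hX x y hx hXx hk1 hkX
  have hx0 : (0 : ℝ) < x := by exact_mod_cast hx
  have hXx11 : X < (x : ℝ) ^ 11 := by
    have h := pow_lt_pow_left₀ hXx (by positivity) (by norm_num : 11 ≠ 0)
    rw [← rpow_natCast, ← rpow_mul (by positivity)] at h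
    norm_num at h
    nlinarith
  have hy0 : y ≠ 0 := by
    rintro rfl
    norm_num [abs_of_pos hx0] at hkX
    linarith
  have hy2 : ((|y| : ℤ) : ℝ) ^ 2 ≤ 2 * (x : ℝ) ^ 11 := by
    have h : ((|y| : ℤ) : ℝ) ^ 2 ≤ (x : ℝ) ^ 11 + ((|x ^ 11 - y ^ 2| : ℤ) : ℝ) := by
      exact_mod_cast (show |y| ^ 2 ≤ x ^ 11 + |x ^ 11 - y ^ 2| by
        rw [sq_abs]; linarith [neg_abs_le (x ^ 11 - y ^ 2)])
    linarith
  exact le_mul_rpow_of_rpow_le hx0.le (by positivity) (by linarith) (by linarith)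
    (rpow_nine_sub_le_of_pow_eleven_le hx0 (by positivity) (by positivity) hkX hC.le hε.le hy2
      (hC_abc x y (by omega) hy0 (abs_pos.1 (by omega)))) hexp
end
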